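/- Let n ≥ 1 be a natural number with n ≠ 2 and fix a real p with 1 < p < p*(n). Define g(q) = (4/(2n-(n-2)(p+1)))^q · (2n-(n-2)(q+1))^{p-1} for q ∈ (p, p*(n)). Then g is strictly decreasing on (p, p*(n)); in particular g(q) < g(p) for all q ∈ (p, p*(n)). -/

import Mathlib

/-!
Write `s(q) = (n + 2) - (n - 2) q`, so that `g(q) = (4 / s(p))^q · s(q)^(p-1)`, and
`log g(q) = q log a + (p - 1) log s(q)` with `a = 4 / s(p)` is concave in `q`. Its slope at `q`
is `log a - (p - 1)(n - 2) / s(q)`. Since `a - 1 = (p - 1)(n - 2) / s(p)` and `a ≠ 1`, the bound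
`log a < a - 1` makes the slope negative at `q = p`, and `(n - 2) / s(q)` is nondecreasing in `q`,
so the slope stays negative on the whole interval.
-/

/-- The auxiliary function `g(q) = (4/(2n-(n-2)(p+1)))^q · (2n-(n-2)(q+1))^{p-1}`. -/
noncomputable def g (n : ℕ) (p q : ℝ) : ℝ :=
  (4 / (2 * (n : ℝ) - ((n : ℝ) - 2) * (p + 1))) ^ q *
    (2 * (n : ℝ) - ((n : ℝ) - 2) * (q + 1)) ^ (p - 1)

open Real

/-- A discrete form of the concavity argument: the secant slope of
`q ↦ q log b + r log (c - d q)` on `[q₁, q₂]` is at most its slope at `q₁`. -/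
lemma rpow_mul_rpow_sub_mul_lt {b c d r q₁ q₂ : ℝ} (hb : 0 < b) (hr : 0 ≤ r)
    (h₁ : 0 < c - d * q₁) (h₂ : 0 < c - d * q₂) (hq : q₁ < q₂)
    (hlog : log b < r * d / (c - d * q₁)) :
    b ^ q₂ * (c - d * q₂) ^ r < b ^ q₁ * (c - d * q₁) ^ r := by
  rw [← log_lt_log_iff (by positivity) (by positivity),
    log_mul (by positivity) (by positivity), log_mul (by positivity) (by positivity),
    log_rpow hb, log_rpow hb, log_rpow h₂, log_rpow h₁]
  have hlog_s : log (c - d * q₂) - log (c - d * q₁) ≤ -(d * (q₂ - q₁)) / (c - d * q₁) := by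
    rw [← log_div h₂.ne' h₁.ne']
    convert log_le_sub_one_of_pos (div_pos h₂ h₁) using 1
    field_simp
    ring
  have hslope : (q₂ - q₁) * log b < (q₂ - q₁) * (r * d / (c - d * q₁)) :=
    mul_lt_mul_of_pos_left hlog (sub_pos.2 hq)
  have hr_s := mul_le_mul_of_nonneg_left hlog_s hr
  have : (q₂ - q₁) * (r * d / (c - d * q₁)) = -(r * (-(d * (q₂ - q₁)) / (c - d * q₁))) := by
    ring
  linarith

lemma div_sub_mul_le_div_sub_mul {c d p q : ℝ} (hp : 0 < c - d * p) (hq : 0 < c - d * q)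
    (hpq : p ≤ q) : d / (c - d * p) ≤ d / (c - d * q) := by
  rw [div_le_div_iff₀ hp hq]
  nlinarith [mul_nonneg (sq_nonneg d) (sub_nonneg.2 hpq)]

lemma g_eq (n : ℕ) (p q : ℝ) :
    g n p q = (4 / ((n + 2) - (n - 2) * p)) ^ q * ((n + 2) - (n - 2) * q) ^ (p - 1) := by
  have h : ∀ x : ℝ, 2 * (n : ℝ) - ((n : ℝ) - 2) * (x + 1) = (n + 2) - (n - 2) * x := fun x => by
    ring
  simp only [g, h]

lemma log_four_div_lt {n : ℕ} (hn2 : n ≠ 2) {p : ℝ} (hp : 1 < p)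
    (hsp : 0 < (n + 2) - (n - 2) * p) :
    log (4 / ((n + 2) - (n - 2) * p)) < (p - 1) * (n - 2) / ((n + 2) - (n - 2) * p) := by
  have hd : (n : ℝ) - 2 ≠ 0 := sub_ne_zero.2 (by exact_mod_cast hn2)
  have hsub : 4 / ((n + 2) - (n - 2) * p) - 1 = (p - 1) * (n - 2) / ((n + 2) - (n - 2) * p) := by
    field_simp
    ring
  rw [← hsub]
  refine log_lt_sub_one_of_pos (by positivity) fun h => ?_
  rw [← sub_eq_zero, hsub, div_eq_zero_iff] at h
  rcases h with h | h
  · exact mul_ne_zero (by linarith) hd h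
  · exact hsp.ne' h

lemma g_strictAntiOn {n : ℕ} (hn2 : n ≠ 2) {p : ℝ} (hp : 1 < p)
    (hsp : 0 < (n + 2) - (n - 2) * p) :
    StrictAntiOn (g n p) {q | p ≤ q ∧ 0 < (n + 2) - (n - 2) * q} := by
  rintro q₁ ⟨hpq₁, hs₁⟩ q₂ ⟨-, hs₂⟩ hq
  rw [g_eq, g_eq]
  refine rpow_mul_rpow_sub_mul_lt (by positivity) (by linarith) hs₁ hs₂ hq ?_
  calc log (4 / ((n + 2) - (n - 2) * p))
      < (p - 1) * (n - 2) / ((n + 2) - (n - 2) * p) := log_four_div_lt hn2 hp hsp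
    _ = (p - 1) * ((n - 2) / ((n + 2) - (n - 2) * p)) := mul_div_assoc _ _ _
    _ ≤ (p - 1) * ((n - 2) / ((n + 2) - (n - 2) * q₁)) :=
        mul_le_mul_of_nonneg_left (div_sub_mul_le_div_sub_mul hsp hs₁ hpq₁) (by linarith)
    _ = (p - 1) * (n - 2) / ((n + 2) - (n - 2) * q₁) := (mul_div_assoc _ _ _).symm

lemma sub_mul_pos_of_lt_criticalExponent {n : ℕ} {q : ℝ} (hq : 0 ≤ q)
    (hqstar : 3 ≤ n → q < ((n : ℝ) + 2) / ((n : ℝ) - 2)) :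
    0 < (n + 2) - (n - 2) * q := by
  rcases le_or_gt n 2 with hn | hn
  · have : (n : ℝ) ≤ 2 := by exact_mod_cast hn
    nlinarith
  · have h2 : (0 : ℝ) < n - 2 := by
      have : (2 : ℝ) < n := by exact_mod_cast hn
      linarith
    have := (lt_div_iff₀ h2).1 (hqstar hn)
    linarith

theorem g_strictAnti_general (n : ℕ) (hn2 : n ≠ 2) (p : ℝ) (hp : 1 < p)
    (hpstar : 3 ≤ n → p < ((n : ℝ) + 2) / ((n : ℝ) - 2)) :
    (∀ q₁ q₂ : ℝ, p < q₁ → q₁ < q₂ → (3 ≤ n → q₂ < ((n : ℝ) + 2) / ((n : ℝ) - 2)) →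
      g n p q₂ < g n p q₁) ∧
    (∀ q : ℝ, p < q → (3 ≤ n → q < ((n : ℝ) + 2) / ((n : ℝ) - 2)) →
      g n p q < g n p p) := by
  have hmem : ∀ q, p ≤ q → (3 ≤ n → q < ((n : ℝ) + 2) / ((n : ℝ) - 2)) →
      q ∈ {q | p ≤ q ∧ 0 < (n + 2) - (n - 2) * q} := fun q hpq hqstar =>
    ⟨hpq, sub_mul_pos_of_lt_criticalExponent (by linarith) hqstar⟩
  have hanti := g_strictAntiOn hn2 hp (hmem p le_rfl hpstar).2
  refine ⟨fun q₁ q₂ hpq₁ hq hq₂star => ?_, fun q hpq hqstar => ?_⟩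
  · exact hanti (hmem q₁ hpq₁.le fun h => hq.trans (hq₂star h)) (hmem q₂ (by linarith) hq₂star) hq
  · exact hanti (hmem p le_rfl hpstar) (hmem q hpq.le hqstar) hpq

/-- For `n ≥ 1`, `n ≠ 2` and `1 < p < p*(n)`, the function `g` is strictly decreasing
on `(p, p*(n))` (the upper bound conditions are vacuous for `n = 1` where
`p*(n) = ∞`); in particular `g(q) < g(p)` for all `q ∈ (p, p*(n))`. -/
theorem g_strictAnti (n : ℕ) (hn : 1 ≤ n) (hn2 : n ≠ 2) (p : ℝ) (hp : 1 < p)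
    (hpstar : 3 ≤ n → p < ((n : ℝ) + 2) / ((n : ℝ) - 2)) :
    (∀ q₁ q₂ : ℝ, p < q₁ → q₁ < q₂ → (3 ≤ n → q₂ < ((n : ℝ) + 2) / ((n : ℝ) - 2)) →
      g n p q₂ < g n p q₁) ∧
    (∀ q : ℝ, p < q → (3 ≤ n → q < ((n : ℝ) + 2) / ((n : ℝ) - 2)) →
      g n p q < g n p p) :=
  g_strictAnti_general n hn2 p hp hpstar
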